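/- Let R be a Noetherian ring of prime characteristic p and I an ideal of positive height generated by n elements. Then for every w ∈ ℕ, the integral closure of I^(n+w) is contained in the tight closure (I^(w+1))*. In particular, closure(I^n) ⊆ I*. -/

import Mathlib

/-!
If `x` satisfies an equation of integral dependence of degree `k + 1` over `J = I ^ (n + w)`,
then `x ^ (k + m) ∈ J ^ m` for every `m`. Since `I` has `n` generators, a monomial of degree
`(n + w) q` in them is, by pigeonhole, a multiple of the `q`-th power of a monomial of degree
`w + 1`; hence `J ^ q ⊆ (I ^ (w + 1))^[q]`. By prime avoidance there is `z` lying in exactly the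
minimal primes that do not contain `x`; then `c = x ^ (k + 1) + z` avoids every minimal prime and
`c x ^ q ∈ J ^ q` modulo nilpotents. In a Noetherian ring the nilradical is nilpotent, and
raising to a large `p`-th power kills the nilpotent error, Frobenius being additive.
-/

open Ideal

/-- Integral closure of an ideal: elements satisfying an equation of integral dependence. -/
def intCl {R : Type*} [CommRing R] (I : Ideal R) : Set R :=
  {x | ∃ k : ℕ, 0 < k ∧ ∃ a : ℕ → R, (∀ i ∈ Finset.Icc 1 k, a i ∈ I ^ i) ∧
      x ^ k + ∑ i ∈ Finset.Icc 1 k, a i * x ^ (k - i) = 0}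

/-- Tight closure of an ideal in characteristic `p`. -/
def tightCl {R : Type*} [CommRing R] (p : ℕ) (I : Ideal R) : Set R :=
  {x | ∃ c : R, (∀ P ∈ minimalPrimes R, c ∉ P) ∧
      ∃ N : ℕ, ∀ e : ℕ, N ≤ e →
        c * x ^ p ^ e ∈ Ideal.span ((fun y => y ^ p ^ e) '' (I : Set R))}

theorem Finset.lt_sum_div_of_card_add_mul_le {ι : Type*} {s : Finset ι} (hs : s.Nonempty)
    {f : ι → ℕ} {q w : ℕ} (hq : 0 < q) (h : (s.card + w) * q ≤ ∑ i ∈ s, f i) :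
    w < ∑ i ∈ s, f i / q := by
  have hlt : q * (s.card + w) < q * (∑ i ∈ s, f i / q + s.card) :=
    calc q * (s.card + w) ≤ ∑ i ∈ s, f i := (mul_comm q _).trans_le h
      _ < ∑ i ∈ s, q * (f i / q + 1) :=
          Finset.sum_lt_sum_of_nonempty hs fun i _ => Nat.lt_mul_div_succ _ hq
      _ = q * (∑ i ∈ s, f i / q + s.card) := by
          rw [← Finset.mul_sum, Finset.sum_add_distrib, Finset.card_eq_sum_ones]
  have := Nat.lt_of_mul_lt_mul_left hlt
  omega

namespace Ideal

variable {R : Type*} [CommSemiring R]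

/-- The Frobenius power `I^[q]`. -/
def bracketPow (I : Ideal R) (q : ℕ) : Ideal R :=
  span ((fun y => y ^ q) '' (I : Set R))

variable {ι : Type*} [Fintype ι] [Nonempty ι]

theorem prod_pow_mem_bracketPow (x : ι → R) {q w : ℕ} (hq : 0 < q) {d : ι → ℕ}
    (hd : (Fintype.card ι + w) * q ≤ ∑ i, d i) :
    ∏ i, x i ^ d i ∈ (span (Set.range x) ^ (w + 1)).bracketPow q := by
  have hw : w + 1 ≤ ∑ i, d i / q := Finset.lt_sum_div_of_card_add_mul_le Finset.univ_nonempty hq hd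
  have hsplit : ∏ i, x i ^ d i = (∏ i, x i ^ (d i / q)) ^ q * ∏ i, x i ^ (d i % q) := by
    rw [← Finset.prod_pow, ← Finset.prod_mul_distrib]
    refine Finset.prod_congr rfl fun i _ => ?_
    rw [← pow_mul, ← pow_add, Nat.div_add_mod']
  have hmem : ∏ i, x i ^ (d i / q) ∈ span (Set.range x) ^ (w + 1) := by
    refine pow_le_pow_right hw ?_
    rw [← Finset.prod_pow_eq_pow_sum]
    exact prod_mem_prod fun i _ => pow_mem_pow (subset_span (Set.mem_range_self i)) _
  rw [hsplit]
  exact mul_mem_right _ _ (subset_span (Set.mem_image_of_mem _ hmem))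

theorem span_range_pow_le_bracketPow (x : ι → R) {q : ℕ} (hq : 0 < q) (w : ℕ) :
    span (Set.range x) ^ ((Fintype.card ι + w) * q) ≤
      (span (Set.range x) ^ (w + 1)).bracketPow q := by
  intro y hy
  obtain ⟨φ, hφ, rfl⟩ := (mem_span_pow_iff_exists_isHomogeneous x y).1 hy
  rw [MvPolynomial.eval_eq']
  refine sum_mem _ fun d hd => mul_mem_left _ _ (prod_pow_mem_bracketPow x hq ?_)
  rw [← Finsupp.degree_eq_sum, Finsupp.degree_eq_weight_one]
  exact (hφ (MvPolynomial.mem_support_iff.1 hd)).ge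

end Ideal

section

variable {R : Type*} [CommRing R]

theorem exists_pow_add_mem_pow_of_mem_intCl {J : Ideal R} {x : R} (hx : x ∈ intCl J) :
    ∃ k, ∀ m, x ^ (k + m) ∈ J ^ m := by
  obtain ⟨_ | k, hk, a, ha, heq⟩ := hx
  · exact absurd hk (lt_irrefl 0)
  refine ⟨k, fun m => ?_⟩
  induction m using Nat.strong_induction_on with
  | _ m ih =>
    cases m with
    | zero => simp
    | succ m =>
      have hxk : x ^ (k + (m + 1)) = -∑ i ∈ Finset.Icc 1 (k + 1), a i * x ^ (k + 1 - i + m) := by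
        rw [show k + (m + 1) = k + 1 + m by ring, pow_add, eq_neg_of_add_eq_zero_left heq,
          neg_mul, Finset.sum_mul]
        simp_rw [mul_assoc, ← pow_add]
      rw [hxk]
      refine neg_mem (sum_mem fun i hi => ?_)
      obtain ⟨hi1, hik⟩ := Finset.mem_Icc.1 hi
      rcases le_or_gt i (m + 1) with him | him
      · have hJ : J ^ i * J ^ (m + 1 - i) = J ^ (m + 1) := by
          rw [← pow_add, Nat.add_sub_cancel' him]
        rw [show k + 1 - i + m = k + (m + 1 - i) by omega, ← hJ]
        exact mul_mem_mul (ha i hi) (ih _ (by omega))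
      · exact mul_mem_right _ _ (pow_le_pow_right him.le (ha i hi))

theorem exists_forall_minimalPrimes_mem_iff_notMem (hfin : (minimalPrimes R).Finite) (x : R) :
    ∃ z : R, ∀ P ∈ minimalPrimes R, z ∈ P ↔ x ∉ P := by
  classical
  set A := hfin.toFinset.filter (x ∉ ·)
  set B := hfin.toFinset.filter (x ∈ ·)
  have hA : ∀ P ∈ A, P ∈ minimalPrimes R ∧ x ∉ P := by simp [A]
  have hB : ∀ Q ∈ B, Q ∈ minimalPrimes R ∧ x ∈ Q := by simp [B]
  have hnot : ¬ ((A.inf id : Ideal R) : Set R) ⊆ ⋃ Q ∈ (B : Set (Ideal R)), (Q : Set R) := by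
    rw [subset_union_prime ⊥ ⊥ fun Q hQ _ _ => (hB Q hQ).1.1.1]
    rintro ⟨Q, hQ, hAQ⟩
    obtain ⟨P, hP, hPQ⟩ := ((hB Q hQ).1.1.1.inf_le').1 hAQ
    exact (hA P hP).2 ((hB Q hQ).1.2 (hA P hP).1.1 hPQ (hB Q hQ).2)
  obtain ⟨z, hzA, hzB⟩ := Set.not_subset.1 hnot
  refine ⟨z, fun P hP => ⟨fun hzP hxP => hzB (Set.mem_biUnion (Finset.mem_filter.2 ⟨hfin.mem_toFinset.2 hP, hxP⟩) hzP),
    fun hxP => Submodule.mem_finsetInf.1 hzA P (Finset.mem_filter.2 ⟨hfin.mem_toFinset.2 hP, hxP⟩)⟩⟩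

theorem exists_notMem_minimalPrimes_mul_pow_mem_sup_nilradical
    (hfin : (minimalPrimes R).Finite) {J : Ideal R} {x : R} {k : ℕ}
    (hx : ∀ m, x ^ (k + m) ∈ J ^ m) :
    ∃ c : R, (∀ P ∈ minimalPrimes R, c ∉ P) ∧ ∀ m, c * x ^ m ∈ J ^ m ⊔ nilradical R := by
  obtain ⟨z, hz⟩ := exists_forall_minimalPrimes_mem_iff_notMem hfin x
  have hzx : z * x ∈ nilradical R := by
    rw [nilradical, ← sInf_minimalPrimes, Submodule.mem_sInf]
    intro P hP
    by_cases hxP : x ∈ P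
    · exact mul_mem_left P z hxP
    · exact mul_mem_right x P ((hz P hP).2 hxP)
  refine ⟨x ^ (k + 1) + z, fun P hP hcP => ?_, fun m => ?_⟩
  · by_cases hxP : x ∈ P
    · refine (hz P hP).1 ?_ hxP
      simpa using P.sub_mem hcP (P.pow_mem_of_mem hxP _ k.succ_pos)
    · refine hxP (hP.1.1.mem_of_pow_mem (k + 1) ?_)
      simpa using P.sub_mem hcP ((hz P hP).2 hxP)
  · cases m with
    | zero => simp
    | succ m =>
      have hpow : x ^ (k + 1) * x ^ (m + 1) = x ^ (k + (m + 1)) * x := by ring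
      have hnil : z * x ^ (m + 1) = z * x * x ^ m := by ring
      rw [add_mul, hpow, hnil]
      exact Submodule.add_mem_sup (mul_mem_right _ _ (hx _)) (mul_mem_right _ _ hzx)

theorem mem_tightCl_of_forall_mul_pow_mem_sup_nilradical [IsNoetherianRing R] {p : ℕ}
    [Fact p.Prime] [CharP R p] {J K : Ideal R} (hJK : ∀ e, J ^ p ^ e ≤ K.bracketPow (p ^ e))
    {c x : R} (hc : ∀ P ∈ minimalPrimes R, c ∉ P) (hcx : ∀ m, c * x ^ m ∈ J ^ m ⊔ nilradical R) :
    x ∈ tightCl p K := by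
  obtain ⟨t, ht⟩ := IsNoetherianRing.isNilpotent_nilradical R
  refine ⟨c ^ p ^ t, fun P hP hcP => hc P hP (hP.1.1.mem_of_pow_mem _ hcP), t, fun e hte => ?_⟩
  obtain ⟨j, hj, ν, hν, hjν⟩ := Submodule.mem_sup.1 (hcx (p ^ (e - t)))
  have hνt : ν ^ p ^ t = 0 := by
    refine pow_eq_zero_of_le (Nat.lt_pow_self (Fact.out : p.Prime).one_lt).le ?_
    simpa [ht] using pow_mem_pow hν t
  have hpe : p ^ e = p ^ (e - t) * p ^ t := by rw [← pow_add, Nat.sub_add_cancel hte]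
  have key : c ^ p ^ t * x ^ p ^ e = j ^ p ^ t := by
    rw [hpe, pow_mul, ← mul_pow, ← hjν, add_pow_char_pow, hνt, add_zero]
  rw [key]
  refine hJK e ?_
  rw [hpe, pow_mul]
  exact pow_mem_pow hj _

end

/-- Hochster–Huneke Briançon–Skoda: if `I` has positive height and is generated by `n`
elements in a Noetherian ring of characteristic `p`, then `closure(I^(n+w)) ⊆ (I^(w+1))*`
for all `w`; in particular `closure(I^n) ⊆ I*`. -/
theorem brianconSkoda_tight {R : Type*} [CommRing R] [IsNoetherianRing R]
    (p : ℕ) [Fact p.Prime] [CharP R p] (I : Ideal R) (n : ℕ)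
    (hgen : ∃ s : Finset R, s.card = n ∧ Ideal.span (s : Set R) = I)
    (hht : ∀ P ∈ minimalPrimes R, ¬ I ≤ P) :
    (∀ w : ℕ, intCl (I ^ (n + w)) ⊆ tightCl p (I ^ (w + 1))) ∧
      intCl (I ^ n) ⊆ tightCl p I := by
  obtain ⟨s, rfl, rfl⟩ := hgen
  have hfrob : ∀ w e, (span (s : Set R) ^ (s.card + w)) ^ p ^ e ≤
      (span (s : Set R) ^ (w + 1)).bracketPow (p ^ e) := by
    intro w e
    rcases s.eq_empty_or_nonempty with rfl | hs
    · -- with no generators, positive height leaves no minimal primes, so `R` is the zero ring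
      have htop : (⊥ : Ideal R) = ⊤ := eq_bot_of_minimalPrimes_eq_empty
        (Set.eq_empty_of_forall_notMem fun P hP => hht P hP (by simp))
      exact (le_top.trans_eq htop.symm).trans bot_le
    · have := hs.to_subtype
      simpa [← pow_mul] using
        span_range_pow_le_bracketPow ((↑) : s → R) (pow_pos (Fact.out : p.Prime).pos e) w
  have main : ∀ w, intCl (span (s : Set R) ^ (s.card + w)) ⊆
      tightCl p (span (s : Set R) ^ (w + 1)) := by
    intro w x hx
    obtain ⟨k, hk⟩ := exists_pow_add_mem_pow_of_mem_intCl hx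
    obtain ⟨c, hc, hcx⟩ := exists_notMem_minimalPrimes_mul_pow_mem_sup_nilradical
      (minimalPrimes.finite_of_isNoetherianRing R) hk
    exact mem_tightCl_of_forall_mul_pow_mem_sup_nilradical (hfrob w) hc hcx
  exact ⟨main, by simpa using main 0⟩
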